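/- For any a, p ∈ ℝ^d, T_{ap} = F_{ap} ∩ Spun(d). -/

import Mathlib

noncomputable section

open CliffordAlgebra

/-- The negative definite quadratic form `v ↦ -‖v‖²` on `ℝ^n`. -/
def Qn (n : ℕ) : QuadraticForm ℝ (Fin n → ℝ) :=
  QuadraticMap.weightedSumSquares ℝ (fun _ : Fin n => (-1 : ℝ))

/-- The Clifford algebra `Cl_n = Cl(ℝ^n, -‖·‖²)`, with generators `e_1, …, e_n`
satisfying `e_j² = -1` and `e_je_k = -e_ke_j` for `j ≠ k`. -/
abbrev Cl (n : ℕ) := CliffordAlgebra (Qn n)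

/-- The generators `e_1, …, e_n` of `Cl_n` (0-indexed). -/
def gC (n : ℕ) (j : Fin n) : Cl n := CliffordAlgebra.ι (Qn n) (Pi.single j 1)

/-- The conjugate `x̄ = α(t(x))`, where `α` is the grade involution and `t` the reversal. -/
def conjC (n : ℕ) (x : Cl n) : Cl n := reverse (involute x)

/-- The linear embedding `i : ℝ^n → Cl_n`. -/
def iC (n : ℕ) (v : Fin n → ℝ) : Cl n := CliffordAlgebra.ι (Qn n) v

/-- Products of distinct generators of `Cl_n`, in increasing order of index. -/
def sprodC (n : ℕ) (s : Finset (Fin n)) : Cl n := ((s.sort (· ≤ ·)).map (gC n)).prod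

/-- The even part `Cl_n^0`: the span of `1` and the products of an even number of
distinct generators. -/
def ClE0 (n : ℕ) : Submodule ℝ (Cl n) :=
  Submodule.span ℝ {x | ∃ s : Finset (Fin n), Even s.card ∧ x = sprodC n s}

/-- The span of the `m`-terms of `Cl_n`: real multiples of products of `m` distinct
generators. -/
def mTermsC (n m : ℕ) : Submodule ℝ (Cl n) :=
  Submodule.span ℝ {x | ∃ s : Finset (Fin n), s.card = m ∧ x = sprodC n s}

/-- `Spin(n)` inside `Cl_n`. -/
def SpinC (n : ℕ) : Set (Cl n) :=
  {x | x ∈ ClE0 n ∧ x * conjC n x = 1 ∧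
    ∀ v : Fin n → ℝ, ∃ w : Fin n → ℝ, x * iC n v * conjC n x = iC n w}

/-- The coefficient of `1` of an element of `Cl_n` (computed via the normalized trace
of left-multiplication, which agrees with the coefficient of `1` w.r.t. the standard
monomial basis since `dim Cl_n = 2^n`). -/
def coeff1C (n : ℕ) (x : Cl n) : ℝ :=
  (2 ^ n : ℝ)⁻¹ * LinearMap.trace ℝ (Cl n) (LinearMap.mulLeft ℝ x)

/-- `X_d`, realized as the dual numbers over `Cl_{d+1}`; the dual-number generator `ε`
is central with `ε² = 0` and plays the role of `e_{d+2}`. -/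
abbrev Xa (d : ℕ) := DualNumber (Cl (d + 1))

namespace X

variable (d : ℕ)

/-- `e_1, …, e_{d+1}` (0-indexed) inside `X_d`. -/
def e (j : Fin (d + 1)) : Xa d := TrivSqZeroExt.inl (gC (d + 1) j)

/-- `e_{d+2}`. -/
def eps : Xa d := DualNumber.eps

/-- The generator `e_{d+1}`. -/
def eL : Xa d := e d (Fin.last d)

/-- The embedding of `ℝ^k` into `X_d` using the first `k` generators. -/
def iK (k : ℕ) (v : Fin k → ℝ) : Xa d :=
  TrivSqZeroExt.inl (CliffordAlgebra.ι (Qn (d + 1))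
    (fun j : Fin (d + 1) => if h : (j : ℕ) < k then v ⟨j, h⟩ else 0))

/-- `i : ℝ^d → X_d`. -/
def iMap (v : Fin d → ℝ) : Xa d := iK d d v

/-- The conjugate `x̄ = α(t(x))` on `X_d`. -/
def conj (x : Xa d) : Xa d :=
  TrivSqZeroExt.inl (conjC (d + 1) (TrivSqZeroExt.fst x)) +
    TrivSqZeroExt.inr (conjC (d + 1) (TrivSqZeroExt.snd x))

/-- The norm `N(x) = x·x̄`. -/
def Nm (x : Xa d) : Xa d := x * conj d x

/-- The generating family of `Z_d^0`: `e_1, …, e_d` and `e_{d+1}e_{d+2}`. -/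
def zgen (j : Fin (d + 1)) : Xa d := if (j : ℕ) < d then e d j else eL d * eps d

/-- Products of distinct elements of a family, in increasing order of index. -/
def sprod (f : Fin (d + 1) → Xa d) (s : Finset (Fin (d + 1))) : Xa d :=
  ((s.sort (· ≤ ·)).map f).prod

/-- `Z_d^0`: the span of `1` and the products of an even number of distinct elements
of `{e_1, …, e_d, e_{d+1}e_{d+2}}`. -/
def Z0 : Submodule ℝ (Xa d) :=
  Submodule.span ℝ {x | ∃ s : Finset (Fin (d + 1)), Even s.card ∧ x = sprod d (zgen d) s}

/-- The span of the `m`-terms of `Z_d^0`. -/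
def Zterms (m : ℕ) : Submodule ℝ (Xa d) :=
  Submodule.span ℝ {x | ∃ s : Finset (Fin (d + 1)), s.card = m ∧ x = sprod d (zgen d) s}

/-- The even Clifford algebra `Cl_k^0` (for `k ≤ d`), viewed inside `X_d`. -/
def ClE (k : ℕ) : Submodule ℝ (Xa d) :=
  Submodule.span ℝ {x | ∃ s : Finset (Fin (d + 1)),
    (∀ j ∈ s, (j : ℕ) < k) ∧ Even s.card ∧ x = sprod d (e d) s}

/-- `Spun(d)`. -/
def Spun : Set (Xa d) :=
  {z | z ∈ Z0 d ∧ Nm d z = 1 ∧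
    ∀ v : Fin d → ℝ, ∃ w : Fin d → ℝ,
      z * (eps d * iMap d v + eL d) * conj d z = eps d * iMap d w + eL d}

/-- `Spin(k)` (for `k ≤ d`), viewed inside `X_d`. -/
def Spin (k : ℕ) : Set (Xa d) :=
  {x | x ∈ ClE d k ∧ Nm d x = 1 ∧
    ∀ v : Fin k → ℝ, ∃ w : Fin k → ℝ, x * iK d k v * conj d x = iK d k w}

/-- `T_{ap}`: the elements of `Spun(d)` whose action takes `a` to `p`. -/
def T (a p : Fin d → ℝ) : Set (Xa d) :=
  {x | x ∈ Spun d ∧ x * (eps d * iMap d a + eL d) * conj d x = eps d * iMap d p + eL d}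

/-- `F_{ap} = (1 + ½e_{d+1}e_{d+2}i(p))·Cl_d^0·(1 − ½e_{d+1}e_{d+2}i(a))`. -/
def F (a p : Fin d → ℝ) : Set (Xa d) :=
  (fun y => (1 + (2 : ℝ)⁻¹ • (eL d * eps d * iMap d p)) * y *
      (1 - (2 : ℝ)⁻¹ • (eL d * eps d * iMap d a))) '' (ClE d d : Set (Xa d))

/-- The coefficient of `1` of an element of `X_d`. -/
def c1 (x : Xa d) : ℝ := coeff1C (d + 1) (TrivSqZeroExt.fst x)

/-- The index set for the 2-term coordinates of `Z_d^0`; it has `d(d+1)/2` elements.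
A pair `(j,k)` with `k < last` indexes the 2-term `e_{j+1}e_{k+1}`, while a pair
`(j, last)` indexes the 2-term `e_{j+1}e_{d+1}e_{d+2}`. -/
abbrev Idx := {p : Fin (d + 1) × Fin (d + 1) // p.1 < p.2}

/-- The coefficient of the 2-term indexed by `p`. -/
def c2 (p : Idx d) (x : Xa d) : ℝ :=
  if (p.1.2 : ℕ) < d
  then coeff1C (d + 1) (gC (d + 1) p.1.2 * gC (d + 1) p.1.1 * TrivSqZeroExt.fst x)
  else coeff1C (d + 1) (gC (d + 1) p.1.2 * gC (d + 1) p.1.1 * TrivSqZeroExt.snd x)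

/-- The hyperplane `H_0 = {x₁ = 0}` (coefficient of `1` vanishes). -/
def H0 : Set (Xa d) := {x | c1 d x = 0}

/-- The map `η_d = π' ∘ π`: scale so that the coefficient of `1` is `1`, then keep only
the 2-term coordinates. -/
def eta (x : Xa d) : Idx d → ℝ := fun p => (c1 d x)⁻¹ * c2 d p x

/-- `Spun(d)_+`: elements of `Spun(d)` with positive coefficient of `1`. -/
def SpunP : Set (Xa d) := {x | x ∈ Spun d ∧ 0 < c1 d x}

/-- `L_{ap} = η_d(T_{ap} \ H_0)`. -/
def L (a p : Fin d → ℝ) : Set (Idx d → ℝ) := eta d '' (T d a p \ H0 d)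

end X

/-!
Write `x = x₀ + ε x₁` with `x₀, x₁ ∈ Cl_{d+1}` and `ε = e_{d+2}`. For `x ∈ Z_d^0` the real part
`x₀` lies in `Cl_d^0`, hence commutes with `e_{d+1}`, while `x₁` anticommutes with `e_{d+1}`;
`N(x) = 1` reads `x₀x̄₀ = 1` and `x₀x̄₁ + x₁x̄₀ = 0`, and `x̄₀x₀ = 1` as well because `Cl_{d+1}` is
finite-dimensional. The real part of `x (e_{d+1} + ε i(a)) x̄` is then automatically `e_{d+1}`, and
its dual part equals `i(p)` exactly when `x₁ = ½ (e_{d+1} i(p) x₀ - x₀ e_{d+1} i(a))`, which is the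
dual part of the unique element of `F_{ap}` with real part `x₀`.
-/

instance CliffordAlgebra.instFiniteDimensional {K M : Type*} [Field K] [Invertible (2 : K)]
    [AddCommGroup M] [Module K M] [FiniteDimensional K M] (Q : QuadraticForm K M) :
    FiniteDimensional K (CliffordAlgebra Q) :=
  have := Module.Finite.of_basis (Module.finBasis K M).ExteriorAlgebra
  .equiv (CliffordAlgebra.equivExterior Q).symm

instance (n : ℕ) : IsArtinianRing (Cl n) := .of_finite ℝ _

theorem mul_list_prod_eq_of_anticomm {R : Type*} [Ring R] {g : R} :
    ∀ {l : List R}, (∀ x ∈ l, g * x = -(x * g)) → g * l.prod = (-1) ^ l.length * l.prod * g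
  | [], _ => by simp
  | x :: l, h => by
    rw [List.forall_mem_cons] at h
    rw [List.prod_cons, ← mul_assoc, h.1, neg_mul, mul_assoc, mul_list_prod_eq_of_anticomm h.2]
    have hx : (-1) ^ l.length * x = x * (-1) ^ l.length := ((Commute.neg_one_left x).pow_left _).eq
    simp only [List.length_cons, pow_succ, ← mul_assoc, ← hx]
    noncomm_ring

theorem polar_Qn {n : ℕ} (u v : Fin n → ℝ) : QuadraticMap.polar (Qn n) u v = -2 * (u ⬝ᵥ v) := by
  simp only [QuadraticMap.polar, Qn, QuadraticMap.weightedSumSquares_apply, dotProduct,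
    Finset.mul_sum, ← Finset.sum_sub_distrib, Pi.add_apply, smul_eq_mul]
  exact Finset.sum_congr rfl fun _ _ => by ring

theorem ι_mul_ι_eq_neg_of_dotProduct_eq_zero {n : ℕ} {u v : Fin n → ℝ} (h : u ⬝ᵥ v = 0) :
    ι (Qn n) u * ι (Qn n) v = -(ι (Qn n) v * ι (Qn n) u) := by
  refine eq_neg_of_add_eq_zero_left ?_
  rw [ι_mul_ι_add_swap, polar_Qn, h, mul_zero, map_zero]

theorem gC_mul_self {n : ℕ} (j : Fin n) : gC n j * gC n j = -1 := by
  have hQ : Qn n (Pi.single j 1) = -1 := by simp [Qn, Pi.single_apply]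
  rw [gC, ι_sq_scalar, hQ, map_neg, map_one]

theorem gC_mul_gC_of_ne {n : ℕ} {j k : Fin n} (h : j ≠ k) : gC n j * gC n k = -(gC n k * gC n j) :=
  ι_mul_ι_eq_neg_of_dotProduct_eq_zero (by simp [h])

/-- The dual part of `x (e_{d+1} + ε A) x̄ = e_{d+1} + ε P` for `x = x₀ + ε x₁`, `x̄ = c₀ + ε c₁`,
with `G = e_{d+1}`. -/
theorem dual_part_eq_iff {R : Type*} [Ring R] [Algebra ℝ R] {G P A x₀ x₁ c₀ c₁ : R}
    (hGG : G * G = -1) (hx₀ : Commute G x₀) (hx₁ : G * x₁ = -(x₁ * G))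
    (hP : G * P = -(P * G)) (hA : G * A = -(A * G))
    (h₀ : x₀ * c₀ = 1) (h₀' : c₀ * x₀ = 1) (h₁ : x₀ * c₁ + x₁ * c₀ = 0) :
    x₀ * G * c₁ + x₀ * A * c₀ + x₁ * G * c₀ = P ↔
      x₁ = (2 : ℝ)⁻¹ • (G * P * x₀ - x₀ * (G * A)) := by
  have hc₁ : x₀ * c₁ = -(x₁ * c₀) := eq_neg_of_add_eq_zero_left h₁
  have hS : x₀ * G * c₁ + x₀ * A * c₀ + x₁ * G * c₀ = ((2 : ℝ) • (x₁ * G) + x₀ * A) * c₀ := by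
    rw [← hx₀.eq, mul_assoc, hc₁, mul_neg, ← mul_assoc, hx₁, two_smul]
    noncomm_ring
  have hmulG {u v : R} : u * G = v ↔ u = -(v * G) :=
    ⟨fun h => by rw [← h, mul_assoc, hGG, mul_neg_one, neg_neg],
      fun h => by rw [h, neg_mul, mul_assoc, hGG, mul_neg_one, neg_neg]⟩
  have hGP : (P * x₀ - x₀ * A) * G = -(G * P * x₀ - x₀ * (G * A)) := by
    rw [sub_mul, mul_assoc, ← hx₀.eq, ← mul_assoc, mul_assoc x₀, ← neg_neg (A * G), ← hA,
      ← neg_neg (P * G), ← hP]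
    noncomm_ring
  calc x₀ * G * c₁ + x₀ * A * c₀ + x₁ * G * c₀ = P
      ↔ (2 : ℝ) • (x₁ * G) + x₀ * A = P * x₀ := by
        rw [hS]
        exact ⟨fun h => by rw [← h, mul_assoc, h₀', mul_one],
          fun h => by rw [h, mul_assoc, h₀, mul_one]⟩
    _ ↔ ((2 : ℝ) • x₁) * G = P * x₀ - x₀ * A := by rw [eq_sub_iff_add_eq, smul_mul_assoc]
    _ ↔ x₁ = (2 : ℝ)⁻¹ • (G * P * x₀ - x₀ * (G * A)) := by
        rw [hmulG, hGP, neg_neg, eq_inv_smul_iff₀ two_ne_zero]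

theorem Finset.sort_insert_of_forall_lt {α : Type*} [LinearOrder α] {s : Finset α} {a : α}
    (h : ∀ b ∈ s, b < a) : (insert a s).sort (· ≤ ·) = s.sort (· ≤ ·) ++ [a] := by
  have ha : a ∉ s := fun has => lt_irrefl a (h a has)
  have hnd : (s.sort (· ≤ ·) ++ [a]).Nodup :=
    List.nodup_append.mpr ⟨s.sort_nodup _, List.nodup_singleton a, by simpa using ha⟩
  rw [← (List.toFinset_sort (· ≤ ·) hnd).mpr]
  · ext; simp
  · refine List.pairwise_append.mpr ⟨s.pairwise_sort _, List.pairwise_singleton _ a, ?_⟩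
    simpa using fun b hb => (h b hb).le

namespace X

open TrivSqZeroExt

variable (d : ℕ)

def gLast : Cl (d + 1) := gC (d + 1) (Fin.last d)

def iCl (v : Fin d → ℝ) : Cl (d + 1) :=
  ι (Qn (d + 1)) fun j => if h : (j : ℕ) < d then v ⟨j, h⟩ else 0

theorem eL_eq : eL d = inl (gLast d) := rfl

theorem iMap_eq (v : Fin d → ℝ) : iMap d v = inl (iCl d v) := rfl

theorem gLast_mul_self : gLast d * gLast d = -1 := gC_mul_self _

theorem gLast_mul_iCl (v : Fin d → ℝ) : gLast d * iCl d v = -(iCl d v * gLast d) :=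
  ι_mul_ι_eq_neg_of_dotProduct_eq_zero (by simp)

theorem gLast_mul_sprodC {s : Finset (Fin (d + 1))} (hs : ∀ j ∈ s, (j : ℕ) < d) :
    gLast d * sprodC (d + 1) s = (-1) ^ s.card * sprodC (d + 1) s * gLast d := by
  rw [sprodC, mul_list_prod_eq_of_anticomm, List.length_map, Finset.length_sort]
  simp only [List.forall_mem_map, Finset.mem_sort]
  exact fun j hj => gC_mul_gC_of_ne (Fin.ne_of_val_ne (hs j hj).ne')

/-- `Cl_d^0` inside `Cl_{d+1}`. -/
def ClEven : Submodule ℝ (Cl (d + 1)) :=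
  Submodule.span ℝ {y | ∃ s : Finset (Fin (d + 1)),
    (∀ j ∈ s, (j : ℕ) < d) ∧ Even s.card ∧ y = sprodC (d + 1) s}

theorem commute_gLast_of_mem_ClEven {y : Cl (d + 1)} (hy : y ∈ ClEven d) : Commute (gLast d) y := by
  induction hy using Submodule.span_induction with
  | mem z hz =>
    obtain ⟨s, hs, hc, rfl⟩ := hz
    rw [Commute, SemiconjBy, gLast_mul_sprodC d hs, hc.neg_one_pow, one_mul]
  | zero => exact Commute.zero_right _
  | add _ _ _ _ h₁ h₂ => exact h₁.add_right h₂
  | smul c _ _ h => exact h.smul_right c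

theorem sprod_e (s : Finset (Fin (d + 1))) : sprod d (e d) s = inl (sprodC (d + 1) s) := by
  rw [sprod, sprodC]
  change _ = inlHom (Cl (d + 1)) (Cl (d + 1)) _
  rw [map_list_prod, List.map_map]
  rfl

theorem ClE_eq_map :
    ClE d d = (ClEven d).map (inlAlgHom ℝ (Cl (d + 1)) (Cl (d + 1))).toLinearMap := by
  rw [ClE, ClEven, Submodule.map_span]
  congr 1
  ext x
  simp [sprod_e, and_assoc, eq_comm]

theorem sprod_zgen_of_forall_lt {s : Finset (Fin (d + 1))} (hs : ∀ j ∈ s, (j : ℕ) < d) :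
    sprod d (zgen d) s = inl (sprodC (d + 1) s) := by
  rw [← sprod_e, sprod, sprod]
  congr 1
  refine List.map_congr_left fun j hj => ?_
  rw [zgen, if_pos (hs j ((Finset.mem_sort _).mp hj))]

theorem sprod_insert_last (f : Fin (d + 1) → Xa d) {t : Finset (Fin (d + 1))}
    (ht : Fin.last d ∉ t) : sprod d f (insert (Fin.last d) t) = sprod d f t * f (Fin.last d) := by
  rw [sprod, sprod, Finset.sort_insert_of_forall_lt, List.map_append, List.prod_append,
    List.map_singleton, List.prod_singleton]
  exact fun b hb => lt_of_le_of_ne (Fin.le_last b) (ne_of_mem_of_not_mem hb ht)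

def ZShape : Submodule ℝ (Xa d) where
  carrier := {x | fst x ∈ ClEven d ∧ gLast d * snd x = -(snd x * gLast d)}
  zero_mem' := ⟨Submodule.zero_mem _, by simp⟩
  add_mem' := by
    rintro x y ⟨hx₀, hx₁⟩ ⟨hy₀, hy₁⟩
    refine ⟨Submodule.add_mem _ hx₀ hy₀, ?_⟩
    rw [snd_add, mul_add, add_mul, hx₁, hy₁, neg_add]
  smul_mem' := by
    rintro c x ⟨hx₀, hx₁⟩
    refine ⟨Submodule.smul_mem _ c hx₀, ?_⟩
    rw [snd_smul, mul_smul_comm, smul_mul_assoc, hx₁, smul_neg]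

theorem Z0_le_ZShape : Z0 d ≤ ZShape d := by
  rw [Z0, Submodule.span_le]
  rintro _ ⟨s, hs, rfl⟩
  by_cases hl : Fin.last d ∈ s
  · obtain ⟨t, ht, rfl⟩ : ∃ t, Fin.last d ∉ t ∧ s = insert (Fin.last d) t :=
      ⟨s.erase _, Finset.notMem_erase _ _, (Finset.insert_erase hl).symm⟩
    have htd : ∀ j ∈ t, (j : ℕ) < d :=
      fun j hj => Fin.val_lt_last (ne_of_mem_of_not_mem hj ht)
    have hodd : Odd t.card := by
      rw [Finset.card_insert_of_notMem ht] at hs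
      exact Nat.not_even_iff_odd.mp (Nat.even_add_one.mp hs)
    have hlast : zgen d (Fin.last d) = inr (gLast d) := by
      rw [zgen, if_neg (by simp), eL_eq, eps]
      ext <;> simp
    rw [SetLike.mem_coe, sprod_insert_last d _ ht, sprod_zgen_of_forall_lt d htd, hlast,
      inl_mul_inr]
    refine ⟨by simp, ?_⟩
    rw [snd_inr, smul_eq_mul, ← mul_assoc, gLast_mul_sprodC d htd, hodd.neg_one_pow]
    noncomm_ring
  · have hsd : ∀ j ∈ s, (j : ℕ) < d :=
      fun j hj => Fin.val_lt_last (ne_of_mem_of_not_mem hj hl)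
    rw [SetLike.mem_coe, sprod_zgen_of_forall_lt d hsd]
    exact ⟨Submodule.subset_span ⟨s, hsd, hs, rfl⟩, by simp⟩

theorem Nm_eq_one_iff (x : Xa d) : Nm d x = 1 ↔
    fst x * conjC (d + 1) (fst x) = 1 ∧
      fst x * conjC (d + 1) (snd x) + snd x * conjC (d + 1) (fst x) = 0 := by
  simp [Nm, conj, TrivSqZeroExt.ext_iff]

theorem eps_iMap_add_eL (v : Fin d → ℝ) :
    eps d * iMap d v + eL d = inl (gLast d) + inr (iCl d v) := by
  ext <;> simp [eps, iMap_eq, eL_eq]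

theorem action_eq_iff {x : Xa d} (h₀ : fst x * conjC (d + 1) (fst x) = 1)
    (hG : Commute (gLast d) (fst x)) (v w : Fin d → ℝ) :
    x * (eps d * iMap d v + eL d) * conj d x = eps d * iMap d w + eL d ↔
      fst x * gLast d * conjC (d + 1) (snd x) + fst x * iCl d v * conjC (d + 1) (fst x) +
        snd x * gLast d * conjC (d + 1) (fst x) = iCl d w := by
  have hfst : fst x * gLast d * conjC (d + 1) (fst x) = gLast d := by
    rw [← hG.eq, mul_assoc, h₀, mul_one]
  simp [eps_iMap_add_eL, conj, TrivSqZeroExt.ext_iff, hfst, add_assoc]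

theorem F_map_inl (a p : Fin d → ℝ) (y : Cl (d + 1)) :
    (1 + (2 : ℝ)⁻¹ • (eL d * eps d * iMap d p)) * inl y *
        (1 - (2 : ℝ)⁻¹ • (eL d * eps d * iMap d a)) =
      inl y + inr ((2 : ℝ)⁻¹ • (gLast d * iCl d p * y - y * (gLast d * iCl d a))) := by
  ext <;> simp [eps, iMap_eq, eL_eq, smul_sub, neg_add_eq_sub]

theorem mem_F_iff (a p : Fin d → ℝ) {x : Xa d} (hx : fst x ∈ ClEven d) :
    x ∈ F d a p ↔
      snd x = (2 : ℝ)⁻¹ • (gLast d * iCl d p * fst x - fst x * (gLast d * iCl d a)) := by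
  simp only [F, ClE_eq_map, Submodule.map_coe, Set.image_image, Set.mem_image, SetLike.mem_coe,
    AlgHom.toLinearMap_apply, inlAlgHom_apply, F_map_inl, TrivSqZeroExt.ext_iff]
  simp [hx, eq_comm]

end X

/-- For any `a, p ∈ ℝ^d`, `T_{ap} = F_{ap} ∩ Spun(d)`. -/
theorem T_eq_F_inter_spun (d : ℕ) (a p : Fin d → ℝ) :
    X.T d a p = X.F d a p ∩ X.Spun d := by
  ext x
  suffices h : x ∈ X.Spun d →
      (x * (X.eps d * X.iMap d a + X.eL d) * X.conj d x = X.eps d * X.iMap d p + X.eL d ↔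
        x ∈ X.F d a p) from
    ⟨fun hx => ⟨(h hx.1).1 hx.2, hx.1⟩, fun hx => ⟨hx.2, (h hx.2).2 hx.1⟩⟩
  rintro ⟨hZ, hN, -⟩
  obtain ⟨hx₀, hx₁⟩ := X.Z0_le_ZShape d hZ
  obtain ⟨h₀, h₁⟩ := (X.Nm_eq_one_iff d x).mp hN
  have hG := X.commute_gLast_of_mem_ClEven d hx₀
  rw [X.action_eq_iff d h₀ hG, X.mem_F_iff d a p hx₀]
  exact dual_part_eq_iff (X.gLast_mul_self d) hG hx₁ (X.gLast_mul_iCl d p) (X.gLast_mul_iCl d a)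
    h₀ (mul_eq_one_symm h₀) h₁
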